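/- Let j ∈ ℤ, x > 0 and let f : [0,∞) → ℝ be continuous and bounded. Then for every integer n ≥ 1, |(S_{n,j}f)(x) − f(x)| ≤ (1 + √(2x + (j-1)(j-2)/n)) · ω(f, 1/√n). -/

import Mathlib

open MeasureTheory Real Filter

/-- Szász basis function `s_{n,k}(x)` for natural index `k`. -/
noncomputable def szasz (n k : ℕ) (x : ℝ) : ℝ :=
  Real.exp (-(n : ℝ) * x) * ((n : ℝ) * x) ^ k / (Nat.factorial k)

/-- Szász basis function for integer index, vanishing for negative index. -/
noncomputable def szaszZ (n : ℕ) (k : ℤ) (x : ℝ) : ℝ :=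
  if 0 ≤ k then szasz n k.toNat x else 0

/-- The generalized Szász–Mirakjan–Durrmeyer operator `S_{n,j}`. -/
noncomputable def Sop (n : ℕ) (j : ℤ) (f : ℝ → ℝ) (x : ℝ) : ℝ :=
  f 0 * ∑ k ∈ Finset.range j.toNat, szasz n k x
    + ∑' (k : ℕ), szasz n k x *
        ((n : ℝ) * ∫ t in Set.Ioi (0 : ℝ), szaszZ n ((k : ℤ) - j) t * f t)

/-- Membership in the class `E_A`: locally integrable on `[0,∞)` with exponential growth. -/
def MemE (A : ℝ) (f : ℝ → ℝ) : Prop :=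
  MeasureTheory.LocallyIntegrableOn f (Set.Ici 0) ∧
    ∃ K > 0, ∀ t ≥ (0 : ℝ), |f t| ≤ K * Real.exp (A * t)

/-- Falling factorial `a↓r = a(a-1)⋯(a-r+1)` for integer `a`. -/
def ffall (a : ℤ) (r : ℕ) : ℤ := ∏ i ∈ Finset.range r, (a - i)

/-- The first order modulus of continuity of `f` on `[0,∞)`. -/
noncomputable def modulus (f : ℝ → ℝ) (δ : ℝ) : ℝ :=
  sSup {y : ℝ | ∃ s t : ℝ, 0 ≤ s ∧ 0 ≤ t ∧ |s - t| ≤ δ ∧ y = |f s - f t|}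

set_option linter.unusedSectionVars false
open Set

lemma integrableOn_pow_mul_exp (p : ℕ) {b : ℝ} (hb : 0 < b) :
    IntegrableOn (fun t : ℝ => t ^ p * Real.exp (-(b * t))) (Set.Ioi 0) := by
  have h := integrableOn_rpow_mul_exp_neg_mul_rpow (p := 1) (s := p) (b := b)
    (lt_of_lt_of_le (by norm_num) (Nat.cast_nonneg p)) zero_lt_one hb
  refine h.congr_fun (fun t ht => ?_) measurableSet_Ioi
  rw [mem_Ioi] at ht
  beta_reduce
  rw [Real.rpow_one, Real.rpow_natCast, neg_mul]

lemma integral_pow_mul_exp (p : ℕ) {b : ℝ} (hb : 0 < b) :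
    ∫ t in Set.Ioi (0:ℝ), t ^ p * Real.exp (-(b * t)) = (Nat.factorial p : ℝ) / b ^ (p + 1) := by
  have h := Real.integral_rpow_mul_exp_neg_mul_Ioi (a := (p : ℝ) + 1) (r := b)
    (by positivity) hb
  rw [show ((p:ℝ) + 1 - 1) = (p:ℝ) by ring] at h
  have e : ∫ t in Set.Ioi (0:ℝ), t ^ p * Real.exp (-(b * t))
      = ∫ t in Set.Ioi (0:ℝ), t ^ (p:ℝ) * Real.exp (-(b * t)) := by
    refine setIntegral_congr_fun measurableSet_Ioi (fun t ht => ?_)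
    rw [Real.rpow_natCast]
  rw [e, h, Real.Gamma_nat_eq_factorial]
  rw [show ((p:ℝ) + 1) = ((p + 1 : ℕ) : ℝ) by push_cast; ring, Real.rpow_natCast]
  rw [div_pow, one_pow, one_div]
  field_simp

lemma szasz_mul_pow_eq (n m r : ℕ) (t : ℝ) :
    szasz n m t * t ^ r
      = ((n:ℝ)^m / (Nat.factorial m)) * (t ^ (m+r) * Real.exp (-((n:ℝ) * t))) := by
  simp only [szasz, neg_mul, pow_add, mul_pow]
  ring

lemma integrableOn_szasz_mul_pow {n : ℕ} (hn : 0 < n) (m r : ℕ) :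
    IntegrableOn (fun t => szasz n m t * t ^ r) (Set.Ioi 0) := by
  simp_rw [szasz_mul_pow_eq]
  exact (integrableOn_pow_mul_exp (m+r) (by exact_mod_cast hn)).const_mul _

lemma integral_szasz_mul_pow {n : ℕ} (hn : 0 < n) (m r : ℕ) :
    ∫ t in Set.Ioi (0:ℝ), szasz n m t * t ^ r
      = (Nat.factorial (m+r) : ℝ) / (Nat.factorial m * (n:ℝ) ^ (r+1)) := by
  simp_rw [szasz_mul_pow_eq, integral_const_mul]
  rw [integral_pow_mul_exp (m+r) (by exact_mod_cast hn)]
  have hnn : (0:ℝ) < (n:ℝ) := by exact_mod_cast hn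
  field_simp
  rw [pow_add]
  ring



lemma szasz_eq (n k : ℕ) (x : ℝ) :
    szasz n k x = Real.exp (-(n:ℝ)*x) * (((n:ℝ)*x)^k / (Nat.factorial k)) :=
  mul_div_assoc _ _ _

lemma szasz_nonneg {n k : ℕ} {x : ℝ} (hx : 0 ≤ x) : 0 ≤ szasz n k x := by
  rw [szasz_eq]
  have : (0:ℝ) ≤ (n:ℝ) * x := by positivity
  positivity

lemma summable_szasz (n : ℕ) (x : ℝ) : Summable (fun k => szasz n k x) := by
  simp_rw [szasz_eq]
  exact (Real.summable_pow_div_factorial _).mul_left _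

lemma tsum_pow_div_factorial (y : ℝ) :
    ∑' k : ℕ, y ^ k / (Nat.factorial k) = Real.exp y := by
  rw [Real.exp_eq_exp_ℝ, NormedSpace.exp_eq_tsum_div]

lemma tsum_szasz (n : ℕ) (x : ℝ) : ∑' k, szasz n k x = 1 := by
  simp_rw [szasz_eq]
  rw [tsum_mul_left, tsum_pow_div_factorial, ← Real.exp_add]
  rw [neg_mul, neg_add_cancel, Real.exp_zero]

lemma szasz_succ_mul (n k : ℕ) (x : ℝ) :
    szasz n (k+1) x * ((k:ℝ)+1) = ((n:ℝ)*x) * szasz n k x := by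
  have h : (Nat.factorial k : ℝ) ≠ 0 := by exact_mod_cast (Nat.factorial_pos k).ne'
  simp only [szasz, pow_succ, Nat.factorial_succ]
  push_cast
  field_simp

lemma szasz_succ_succ_mul (n k : ℕ) (x : ℝ) :
    szasz n (k+2) x * (((k:ℝ)+2)*((k:ℝ)+1)) = ((n:ℝ)*x)^2 * szasz n k x := by
  have h1 := szasz_succ_mul n (k+1) x
  have h2 := szasz_succ_mul n k x
  push_cast at h1
  have e : szasz n (k + 2) x * (((k:ℝ)+2)*((k:ℝ)+1))
      = (szasz n (k+1+1) x * ((k:ℝ)+1+1)) * ((k:ℝ)+1) := by ring_nf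
  rw [e, h1]
  rw [mul_assoc, h2]
  ring

lemma summable_szasz_mul_id (n : ℕ) (x : ℝ) :
    Summable (fun k : ℕ => szasz n k x * (k:ℝ)) := by
  rw [← summable_nat_add_iff 1]
  have : (fun k : ℕ => szasz n (k+1) x * ((k+1 : ℕ):ℝ))
      = fun k : ℕ => ((n:ℝ)*x) * szasz n k x := by
    funext k; push_cast; exact szasz_succ_mul n k x
  rw [this]
  exact (summable_szasz n x).mul_left _

lemma tsum_szasz_mul_id (n : ℕ) (x : ℝ) :
    ∑' k : ℕ, szasz n k x * (k:ℝ) = (n:ℝ)*x := by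
  rw [Summable.tsum_eq_zero_add (summable_szasz_mul_id n x)]
  have : (fun k : ℕ => szasz n (k+1) x * ((k+1 : ℕ):ℝ))
      = fun k : ℕ => ((n:ℝ)*x) * szasz n k x := by
    funext k; push_cast; exact szasz_succ_mul n k x
  simp only [Nat.cast_zero, mul_zero, zero_add]
  calc ∑' k : ℕ, szasz n (k+1) x * ((k+1 : ℕ):ℝ)
      = ∑' k : ℕ, ((n:ℝ)*x) * szasz n k x := by rw [this]
    _ = (n:ℝ)*x := by rw [tsum_mul_left, tsum_szasz]; ring

lemma summable_szasz_mul_sub (n : ℕ) (x : ℝ) :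
    Summable (fun k : ℕ => szasz n k x * ((k:ℝ)*((k:ℝ)-1))) := by
  rw [← summable_nat_add_iff 2]
  have : (fun k : ℕ => szasz n (k+2) x * (((k+2:ℕ):ℝ)*(((k+2:ℕ):ℝ)-1)))
      = fun k : ℕ => ((n:ℝ)*x)^2 * szasz n k x := by
    funext k; push_cast
    rw [show ((k:ℝ)+2-1) = ((k:ℝ)+1) by ring]
    exact szasz_succ_succ_mul n k x
  rw [this]
  exact (summable_szasz n x).mul_left _

lemma tsum_szasz_mul_sub (n : ℕ) (x : ℝ) :
    ∑' k : ℕ, szasz n k x * ((k:ℝ)*((k:ℝ)-1)) = ((n:ℝ)*x)^2 := by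
  rw [Summable.tsum_eq_zero_add (summable_szasz_mul_sub n x)]
  rw [Summable.tsum_eq_zero_add ((summable_nat_add_iff 1).mpr (summable_szasz_mul_sub n x))]
  have : (fun k : ℕ => szasz n (k+1+1) x * (((k+1+1:ℕ):ℝ)*(((k+1+1:ℕ):ℝ)-1)))
      = fun k : ℕ => ((n:ℝ)*x)^2 * szasz n k x := by
    funext k; push_cast
    rw [show ((k:ℝ)+1+1-1) = ((k:ℝ)+1) by ring,
        show ((k:ℝ)+1+1) = ((k:ℝ)+2) by ring]
    exact szasz_succ_succ_mul n k x
  rw [this]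
  simp only [Nat.cast_zero, Nat.cast_one, mul_zero, zero_mul, zero_add]
  norm_num
  rw [tsum_mul_left, tsum_szasz, mul_one]

lemma summable_szasz_quad (n : ℕ) (x : ℝ) (a b c : ℝ) :
    Summable (fun k : ℕ => szasz n k x * (a + b*(k:ℝ) + c*((k:ℝ)*((k:ℝ)-1)))) := by
  have := (((summable_szasz n x).mul_right a).add
    ((summable_szasz_mul_id n x).mul_right b)).add
    ((summable_szasz_mul_sub n x).mul_right c)
  refine this.congr (fun k => ?_)
  ring

lemma tsum_szasz_quad (n : ℕ) (x : ℝ) (a b c : ℝ) :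
    ∑' k : ℕ, szasz n k x * (a + b*(k:ℝ) + c*((k:ℝ)*((k:ℝ)-1)))
      = a + b*((n:ℝ)*x) + c*((n:ℝ)*x)^2 := by
  have e : (fun k : ℕ => szasz n k x * (a + b*(k:ℝ) + c*((k:ℝ)*((k:ℝ)-1))))
      = fun k : ℕ => (szasz n k x * a + szasz n k x * (k:ℝ) * b)
          + szasz n k x * ((k:ℝ)*((k:ℝ)-1)) * c := by
    funext k; ring
  rw [e, Summable.tsum_add (((summable_szasz n x).mul_right a).add
      ((summable_szasz_mul_id n x).mul_right b))
      ((summable_szasz_mul_sub n x).mul_right c),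
    Summable.tsum_add ((summable_szasz n x).mul_right a)
      ((summable_szasz_mul_id n x).mul_right b),
    tsum_mul_right, tsum_mul_right, tsum_mul_right,
    tsum_szasz, tsum_szasz_mul_id, tsum_szasz_mul_sub]
  ring

section
variable {f : ℝ → ℝ} {M : ℝ} (hfb : ∀ t ≥ (0:ℝ), |f t| ≤ M)
include hfb

lemma modulus_bddAbove (δ : ℝ) :
    BddAbove {y : ℝ | ∃ s t : ℝ, 0 ≤ s ∧ 0 ≤ t ∧ |s - t| ≤ δ ∧ y = |f s - f t|} := by
  refine ⟨2*M, fun y hy => ?_⟩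
  obtain ⟨s, t, hs, ht, -, rfl⟩ := hy
  calc |f s - f t| ≤ |f s| + |f t| := abs_sub _ _
    _ ≤ M + M := add_le_add (hfb s hs) (hfb t ht)
    _ = 2*M := by ring

lemma modulus_nonneg {δ : ℝ} (hδ : 0 ≤ δ) : 0 ≤ modulus f δ := by
  refine le_csSup (modulus_bddAbove hfb δ) ⟨0, 0, le_rfl, le_rfl, by simpa, by simp⟩

lemma abs_sub_le_modulus {δ s t : ℝ} (hs : 0 ≤ s) (ht : 0 ≤ t) (h : |s - t| ≤ δ) :
    |f s - f t| ≤ modulus f δ :=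
  le_csSup (modulus_bddAbove hfb δ) ⟨s, t, hs, ht, h, rfl⟩

lemma abs_sub_le_modulus' {δ s t : ℝ} (hδ : 0 < δ) (hs : 0 ≤ s) (ht : 0 ≤ t) :
    |f s - f t| ≤ (1 + |s - t|/δ) * modulus f δ := by
  have hω := modulus_nonneg hfb hδ.le
  have hr : (0:ℝ) ≤ |s - t|/δ := by positivity
  set m : ℕ := ⌈|s - t|/δ⌉₊ with hm
  rcases Nat.eq_zero_or_pos m with h0 | hpos
  · have h1 : |s - t|/δ = 0 := le_antisymm (Nat.ceil_eq_zero.mp h0) hr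
    have h2 : |s - t| = 0 := by rwa [div_eq_zero_iff, or_iff_left hδ.ne'] at h1
    have hst : |s - t| ≤ δ := by rw [h2]; exact hδ.le
    calc |f s - f t| ≤ modulus f δ := abs_sub_le_modulus hfb hs ht hst
      _ ≤ (1 + |s - t|/δ) * modulus f δ := by nlinarith
  · have hmR : (0:ℝ) < (m:ℝ) := by exact_mod_cast hpos
    set p : ℕ → ℝ := fun i => s + (i:ℝ) * ((t - s)/(m:ℝ)) with hp
    have hp0 : p 0 = s := by simp [hp]
    have hpm : p m = t := by
      simp only [hp]
      field_simp
      ring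
    have hnn : ∀ i, i ≤ m → 0 ≤ p i := by
      intro i hi
      have hiR : (i:ℝ) ≤ (m:ℝ) := by exact_mod_cast hi
      rcases le_total s t with hle | hle
      · have : 0 ≤ (i:ℝ) * ((t - s)/(m:ℝ)) :=
          mul_nonneg (Nat.cast_nonneg i) (div_nonneg (by linarith) hmR.le)
        simp only [hp]; linarith
      · have h1 : (t - s)/(m:ℝ) ≤ 0 := by
          apply div_nonpos_of_nonpos_of_nonneg <;> linarith
        have h2 : (m:ℝ) * ((t - s)/(m:ℝ)) ≤ (i:ℝ) * ((t - s)/(m:ℝ)) :=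
          mul_le_mul_of_nonpos_right hiR h1
        have h3 : (m:ℝ) * ((t - s)/(m:ℝ)) = t - s := by field_simp
        simp only [hp]; nlinarith
    have hstep : ∀ i, |p (i+1) - p i| ≤ δ := by
      intro i
      have : p (i+1) - p i = (t - s)/(m:ℝ) := by
        simp only [hp]; push_cast; ring
      rw [this, abs_div, abs_of_pos hmR]
      rw [div_le_iff₀ hmR]
      have hceil : |s - t|/δ ≤ (m:ℝ) := Nat.le_ceil _
      rw [div_le_iff₀ hδ] at hceil
      calc |t - s| = |s - t| := abs_sub_comm t s
        _ ≤ (m:ℝ) * δ := hceil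
        _ = δ * (m:ℝ) := by ring
    have htel : f t - f s = ∑ i ∈ Finset.range m, (f (p (i+1)) - f (p i)) := by
      rw [Finset.sum_range_sub (fun i => f (p i)), hp0, hpm]
    have hsum : |f t - f s| ≤ (m:ℝ) * modulus f δ := by
      rw [htel]
      calc |∑ i ∈ Finset.range m, (f (p (i+1)) - f (p i))|
          ≤ ∑ i ∈ Finset.range m, |f (p (i+1)) - f (p i)| :=
            Finset.abs_sum_le_sum_abs _ _
        _ ≤ ∑ _i ∈ Finset.range m, modulus f δ := by
            refine Finset.sum_le_sum (fun i hi => ?_)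
            have hi' : i + 1 ≤ m := Finset.mem_range.mp hi
            exact abs_sub_le_modulus hfb (hnn _ hi') (hnn _ (le_of_lt (Finset.mem_range.mp hi)))
              (hstep i)
        _ = (m:ℝ) * modulus f δ := by
            rw [Finset.sum_const, Finset.card_range, nsmul_eq_mul]
    have hmle : (m:ℝ) ≤ 1 + |s - t|/δ := by
      have := Nat.ceil_lt_add_one hr
      rw [← hm] at this
      linarith
    calc |f s - f t| = |f t - f s| := abs_sub_comm _ _
      _ ≤ (m:ℝ) * modulus f δ := hsum
      _ ≤ (1 + |s - t|/δ) * modulus f δ := mul_le_mul_of_nonneg_right hmle hω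

end


section PerK
variable {n : ℕ} (hn : 0 < n)
include hn

lemma integrableOn_szasz (m : ℕ) : IntegrableOn (fun t => szasz n m t) (Set.Ioi 0) := by
  have h := integrableOn_szasz_mul_pow hn m 0
  simpa using h

lemma nintegral_szasz (m : ℕ) : (n:ℝ) * ∫ t in Set.Ioi (0:ℝ), szasz n m t = 1 := by
  have h := integral_szasz_mul_pow hn m 0
  simp only [pow_zero, mul_one, add_zero] at h
  rw [h]
  have h1 : (Nat.factorial m : ℝ) ≠ 0 := by exact_mod_cast (Nat.factorial_pos m).ne'
  have h2 : (0:ℝ) < (n:ℝ) := by exact_mod_cast hn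
  field_simp
  ring

omit hn in
lemma fact_cast_succ (m : ℕ) :
    (Nat.factorial (m+1) : ℝ) = ((m:ℝ)+1) * (Nat.factorial m) := by
  rw [Nat.factorial_succ]; push_cast; ring

lemma nintegral_szasz_mul_t (m : ℕ) :
    (n:ℝ) * ∫ t in Set.Ioi (0:ℝ), szasz n m t * t = ((m:ℝ)+1) / (n:ℝ) := by
  have h := integral_szasz_mul_pow hn m 1
  simp only [pow_one] at h
  rw [h, fact_cast_succ]
  have h1 : (Nat.factorial m : ℝ) ≠ 0 := by exact_mod_cast (Nat.factorial_pos m).ne'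
  have h2 : (0:ℝ) < (n:ℝ) := by exact_mod_cast hn
  field_simp

lemma nintegral_szasz_mul_sq (m : ℕ) :
    (n:ℝ) * ∫ t in Set.Ioi (0:ℝ), szasz n m t * t^2
      = ((m:ℝ)+1) * ((m:ℝ)+2) / (n:ℝ)^2 := by
  have h := integral_szasz_mul_pow hn m 2
  rw [h, show m + 2 = (m+1)+1 from rfl, fact_cast_succ, fact_cast_succ]
  have h1 : (Nat.factorial m : ℝ) ≠ 0 := by exact_mod_cast (Nat.factorial_pos m).ne'
  have h2 : (0:ℝ) < (n:ℝ) := by exact_mod_cast hn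
  push_cast
  field_simp
  ring

lemma integrableOn_szasz_central (m : ℕ) (x : ℝ) :
    IntegrableOn (fun t => szasz n m t * (t - x)^2) (Set.Ioi 0) := by
  have e : (fun t => szasz n m t * (t - x)^2)
      = fun t => (szasz n m t * t^2 - (2*x) * (szasz n m t * t^1))
          + x^2 * (szasz n m t * t^0) := by
    funext t; ring
  rw [e]
  exact (((integrableOn_szasz_mul_pow hn m 2).sub
    ((integrableOn_szasz_mul_pow hn m 1).const_mul _)).add
    ((integrableOn_szasz_mul_pow hn m 0).const_mul _))

lemma nintegral_szasz_central (m : ℕ) (x : ℝ) :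
    (n:ℝ) * ∫ t in Set.Ioi (0:ℝ), szasz n m t * (t - x)^2
      = ((m:ℝ)+1)*((m:ℝ)+2)/(n:ℝ)^2 - 2*x*((m:ℝ)+1)/(n:ℝ) + x^2 := by
  have e : (fun t => szasz n m t * (t - x)^2)
      = fun t => (szasz n m t * t^2 - (2*x) * (szasz n m t * t^1))
          + x^2 * (szasz n m t * t^0) := by
    funext t; ring
  have hI2 : IntegrableOn (fun t => szasz n m t * t^2) (Set.Ioi 0) :=
    integrableOn_szasz_mul_pow hn m 2
  have hI1 : IntegrableOn (fun t => (2*x) * (szasz n m t * t^1)) (Set.Ioi 0) := by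
    exact (integrableOn_szasz_mul_pow hn m 1).const_mul _
  have hI0 : IntegrableOn (fun t => x^2 * (szasz n m t * t^0)) (Set.Ioi 0) := by
    exact (integrableOn_szasz_mul_pow hn m 0).const_mul _
  have hI21 : IntegrableOn
      (fun t => szasz n m t * t^2 - (2*x) * (szasz n m t * t^1)) (Set.Ioi 0) := by
    exact hI2.sub hI1
  rw [e, integral_add hI21 hI0, integral_sub hI2 hI1,
    integral_const_mul, integral_const_mul]
  simp only [pow_one, pow_zero, mul_one]
  have h2 := nintegral_szasz_mul_sq hn m
  have h1 := nintegral_szasz_mul_t hn m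
  have h0 := nintegral_szasz hn m
  linear_combination h2 - 2*x*h1 + x^2*h0

lemma continuous_szasz (m : ℕ) : Continuous (fun t => szasz n m t) := by
  unfold szasz
  fun_prop

lemma integrableOn_szasz_abs (m : ℕ) (x : ℝ) (hx : 0 ≤ x) :
    IntegrableOn (fun t => szasz n m t * |t - x|) (Set.Ioi 0) := by
  have hg : IntegrableOn
      (fun t => szasz n m t * t^1 + x * (szasz n m t * t^0)) (Set.Ioi 0) :=
    (integrableOn_szasz_mul_pow hn m 1).add
      ((integrableOn_szasz_mul_pow hn m 0).const_mul _)
  refine Integrable.mono hg ?_ ?_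
  · exact ((continuous_szasz hn m).mul (continuous_abs.comp (by fun_prop))).aestronglyMeasurable
  · rw [ae_restrict_iff' measurableSet_Ioi]
    filter_upwards with t ht
    rw [mem_Ioi] at ht
    have hsz : 0 ≤ szasz n m t := szasz_nonneg ht.le
    have h1 : |t - x| ≤ t + x := by
      rw [abs_le]; constructor <;> linarith
    have hfn : 0 ≤ szasz n m t * |t - x| := mul_nonneg hsz (abs_nonneg _)
    have hgn : 0 ≤ szasz n m t * t^1 + x * (szasz n m t * t^0) := by
      have : 0 ≤ szasz n m t * t^1 := by positivity
      have : 0 ≤ x * (szasz n m t * t^0) := by positivity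
      linarith
    rw [Real.norm_eq_abs, Real.norm_eq_abs, abs_of_nonneg hfn, abs_of_nonneg hgn]
    simp only [pow_one, pow_zero, mul_one]
    nlinarith

lemma nintegral_szasz_abs_nonneg (m : ℕ) (x : ℝ) :
    0 ≤ (n:ℝ) * ∫ t in Set.Ioi (0:ℝ), szasz n m t * |t - x| := by
  refine mul_nonneg (Nat.cast_nonneg n) ?_
  refine setIntegral_nonneg measurableSet_Ioi (fun t ht => ?_)
  exact mul_nonneg (szasz_nonneg (le_of_lt ht)) (abs_nonneg _)

lemma nintegral_szasz_abs_le_sqrt (m : ℕ) (x : ℝ) (hx : 0 ≤ x) :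
    (n:ℝ) * ∫ t in Set.Ioi (0:ℝ), szasz n m t * |t - x|
      ≤ Real.sqrt ((n:ℝ) * ∫ t in Set.Ioi (0:ℝ), szasz n m t * (t - x)^2) := by
  set c := (n:ℝ) * ∫ t in Set.Ioi (0:ℝ), szasz n m t * |t - x| with hc
  set V := (n:ℝ) * ∫ t in Set.Ioi (0:ℝ), szasz n m t * (t - x)^2 with hV
  have hc0 : 0 ≤ c := nintegral_szasz_abs_nonneg hn m x
  have hsq : c^2 ≤ V := by
    have e : (fun t => szasz n m t * (|t - x| - c)^2)
        = fun t => (szasz n m t * (t - x)^2 - (2*c) * (szasz n m t * |t - x|))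
            + c^2 * (szasz n m t) := by
      funext t
      linear_combination szasz n m t * (sq_abs (t - x))
    have hnonneg : 0 ≤ ∫ t in Set.Ioi (0:ℝ), szasz n m t * (|t - x| - c)^2 := by
      refine setIntegral_nonneg measurableSet_Ioi (fun t ht => ?_)
      exact mul_nonneg (szasz_nonneg (le_of_lt ht)) (sq_nonneg _)
    have hval : ∫ t in Set.Ioi (0:ℝ), szasz n m t * (|t - x| - c)^2
        = (∫ t in Set.Ioi (0:ℝ), szasz n m t * (t - x)^2)
          - (2*c) * (∫ t in Set.Ioi (0:ℝ), szasz n m t * |t - x|)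
          + c^2 * (∫ t in Set.Ioi (0:ℝ), szasz n m t) := by
      have hIc : IntegrableOn (fun t => szasz n m t * (t - x)^2) (Set.Ioi 0) :=
        integrableOn_szasz_central hn m x
      have hIa : IntegrableOn (fun t => (2*c) * (szasz n m t * |t - x|)) (Set.Ioi 0) := by
        exact (integrableOn_szasz_abs hn m x hx).const_mul _
      have hI0 : IntegrableOn (fun t => c^2 * (szasz n m t)) (Set.Ioi 0) := by
        exact (integrableOn_szasz hn m).const_mul _
      have hIca : IntegrableOn
          (fun t => szasz n m t * (t - x)^2 - (2*c) * (szasz n m t * |t - x|)) (Set.Ioi 0) := by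
        exact hIc.sub hIa
      rw [e, integral_add hIca hI0, integral_sub hIc hIa,
        integral_const_mul, integral_const_mul]
    have h0 := nintegral_szasz hn m
    have hn0 : (0:ℝ) < (n:ℝ) := by exact_mod_cast hn
    have key : 0 ≤ (n:ℝ) * ∫ t in Set.Ioi (0:ℝ), szasz n m t * (|t - x| - c)^2 :=
      mul_nonneg hn0.le hnonneg
    rw [hval] at key
    have expand : (n:ℝ) * ((∫ t in Set.Ioi (0:ℝ), szasz n m t * (t - x)^2)
          - (2*c) * (∫ t in Set.Ioi (0:ℝ), szasz n m t * |t - x|)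
          + c^2 * (∫ t in Set.Ioi (0:ℝ), szasz n m t))
        = V - 2*c*c + c^2 * ((n:ℝ) * ∫ t in Set.Ioi (0:ℝ), szasz n m t) := by
      rw [hV, hc]; ring
    rw [expand, h0] at key
    nlinarith
  calc c = Real.sqrt (c^2) := by rw [Real.sqrt_sq hc0]
    _ ≤ Real.sqrt V := Real.sqrt_le_sqrt hsq

end PerK


section Fsec
variable {n : ℕ} (hn : 0 < n) {f : ℝ → ℝ} {M : ℝ}
  (hfc : ContinuousOn f (Set.Ici 0)) (hfM : ∀ t ≥ (0:ℝ), |f t| ≤ M)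

include hn hfc hfM in
lemma integrableOn_szasz_mul_f (m : ℕ) :
    IntegrableOn (fun t => szasz n m t * f t) (Set.Ioi 0) := by
  have hg : IntegrableOn (fun t => M * szasz n m t) (Set.Ioi 0) := by
    exact (integrableOn_szasz hn m).const_mul M
  have hmeas : AEStronglyMeasurable (fun t => szasz n m t * f t)
      (volume.restrict (Set.Ioi 0)) := by
    have hcont : ContinuousOn (fun t => szasz n m t * f t) (Set.Ioi 0) :=
      ((continuous_szasz hn m).continuousOn).mul (hfc.mono Set.Ioi_subset_Ici_self)
    exact hcont.aestronglyMeasurable measurableSet_Ioi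
  refine hg.mono' hmeas ?_
  rw [ae_restrict_iff' measurableSet_Ioi]
  filter_upwards with t ht
  rw [Set.mem_Ioi] at ht
  have h1 : 0 ≤ szasz n m t := szasz_nonneg ht.le
  have h2 := hfM t ht.le
  rw [Real.norm_eq_abs, abs_mul, abs_of_nonneg h1]
  nlinarith [abs_nonneg (f t)]

include hn hfc hfM in
lemma wk_abs_le (m : ℕ) :
    |(n:ℝ) * ∫ t in Set.Ioi (0:ℝ), szasz n m t * f t| ≤ M := by
  have hint := integrableOn_szasz_mul_f hn hfc hfM m
  have h1 : ‖∫ t in Set.Ioi (0:ℝ), szasz n m t * f t‖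
      ≤ ∫ t in Set.Ioi (0:ℝ), ‖szasz n m t * f t‖ := norm_integral_le_integral_norm _
  have h2 : ∫ t in Set.Ioi (0:ℝ), ‖szasz n m t * f t‖
      ≤ ∫ t in Set.Ioi (0:ℝ), M * szasz n m t := by
    refine setIntegral_mono_on hint.norm
      (by exact (integrableOn_szasz hn m).const_mul M) measurableSet_Ioi ?_
    intro t ht
    rw [Set.mem_Ioi] at ht
    rw [Real.norm_eq_abs, abs_mul, abs_of_nonneg (szasz_nonneg ht.le)]
    nlinarith [hfM t ht.le, szasz_nonneg (n := n) (k := m) ht.le, abs_nonneg (f t)]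
  have h0 := nintegral_szasz hn m
  have hnn : (0:ℝ) ≤ (n:ℝ) := Nat.cast_nonneg n
  rw [Real.norm_eq_abs] at h1
  rw [abs_mul, abs_of_nonneg hnn]
  calc (n:ℝ) * |∫ t in Set.Ioi (0:ℝ), szasz n m t * f t|
      ≤ (n:ℝ) * ∫ t in Set.Ioi (0:ℝ), M * szasz n m t :=
        mul_le_mul_of_nonneg_left (h1.trans h2) hnn
    _ = M * ((n:ℝ) * ∫ t in Set.Ioi (0:ℝ), szasz n m t) := by
        rw [integral_const_mul]; ring
    _ = M := by rw [h0, mul_one]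

include hn hfc hfM in
lemma sub_fx_eq (m : ℕ) (x : ℝ) :
    (n:ℝ) * (∫ t in Set.Ioi (0:ℝ), szasz n m t * f t) - f x
      = (n:ℝ) * ∫ t in Set.Ioi (0:ℝ), szasz n m t * (f t - f x) := by
  have hIf := integrableOn_szasz_mul_f hn hfc hfM m
  have hIc : IntegrableOn (fun t => f x * szasz n m t) (Set.Ioi 0) := by
    exact (integrableOn_szasz hn m).const_mul (f x)
  have e : ∫ t in Set.Ioi (0:ℝ), szasz n m t * (f t - f x)
      = (∫ t in Set.Ioi (0:ℝ), szasz n m t * f t)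
        - ∫ t in Set.Ioi (0:ℝ), f x * szasz n m t := by
    rw [← integral_sub hIf hIc]
    exact setIntegral_congr_fun measurableSet_Ioi fun t _ => by ring
  rw [e, integral_const_mul]
  have h0 := nintegral_szasz hn m
  linear_combination (f x) * h0

include hn hfc hfM in
lemma integrableOn_szasz_mul_fabs (m : ℕ) (x : ℝ) :
    IntegrableOn (fun t => szasz n m t * |f t - f x|) (Set.Ioi 0) := by
  have hg : IntegrableOn (fun t => (M + |f x|) * szasz n m t) (Set.Ioi 0) := by
    exact (integrableOn_szasz hn m).const_mul _
  have hmeas : AEStronglyMeasurable (fun t => szasz n m t * |f t - f x|)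
      (volume.restrict (Set.Ioi 0)) := by
    have hcont : ContinuousOn (fun t => szasz n m t * |f t - f x|) (Set.Ioi 0) :=
      ((continuous_szasz hn m).continuousOn).mul
        (((hfc.mono Set.Ioi_subset_Ici_self).sub continuousOn_const).abs)
    exact hcont.aestronglyMeasurable measurableSet_Ioi
  refine hg.mono' hmeas ?_
  rw [ae_restrict_iff' measurableSet_Ioi]
  filter_upwards with t ht
  rw [Set.mem_Ioi] at ht
  have h1 : 0 ≤ szasz n m t := szasz_nonneg ht.le
  have h2 := hfM t ht.le
  have h3 : |f t - f x| ≤ M + |f x| := by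
    calc |f t - f x| ≤ |f t| + |f x| := abs_sub _ _
      _ ≤ M + |f x| := by linarith
  rw [Real.norm_eq_abs, abs_mul, abs_of_nonneg h1, abs_abs]
  nlinarith [abs_nonneg (f t - f x)]

include hn hfc hfM in
lemma per_k_bound (m : ℕ) (x : ℝ) (hx : 0 ≤ x) {δ : ℝ} (hδ : 0 < δ) :
    |(n:ℝ) * ∫ t in Set.Ioi (0:ℝ), szasz n m t * (f t - f x)|
      ≤ (1 + ((n:ℝ) * ∫ t in Set.Ioi (0:ℝ), szasz n m t * |t - x|)/δ)
          * modulus f δ := by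
  have hω := modulus_nonneg hfM hδ.le
  have h1 : ‖∫ t in Set.Ioi (0:ℝ), szasz n m t * (f t - f x)‖
      ≤ ∫ t in Set.Ioi (0:ℝ), ‖szasz n m t * (f t - f x)‖ :=
    norm_integral_le_integral_norm _
  have h1' : ∫ t in Set.Ioi (0:ℝ), ‖szasz n m t * (f t - f x)‖
      = ∫ t in Set.Ioi (0:ℝ), szasz n m t * |f t - f x| := by
    refine setIntegral_congr_fun measurableSet_Ioi fun t ht => ?_
    rw [Real.norm_eq_abs, abs_mul, abs_of_nonneg (szasz_nonneg (le_of_lt ht))]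
  have hIrhs : IntegrableOn (fun t => modulus f δ * szasz n m t
      + (modulus f δ/δ) * (szasz n m t * |t - x|)) (Set.Ioi 0) := by
    exact ((integrableOn_szasz hn m).const_mul _).add
      ((integrableOn_szasz_abs hn m x hx).const_mul _)
  have h2 : ∫ t in Set.Ioi (0:ℝ), szasz n m t * |f t - f x|
      ≤ ∫ t in Set.Ioi (0:ℝ), (modulus f δ * szasz n m t
          + (modulus f δ/δ) * (szasz n m t * |t - x|)) := by
    refine setIntegral_mono_on (integrableOn_szasz_mul_fabs hn hfc hfM m x)
      hIrhs measurableSet_Ioi ?_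
    intro t ht
    rw [Set.mem_Ioi] at ht
    have hb := abs_sub_le_modulus' hfM hδ ht.le hx
    have hsz : 0 ≤ szasz n m t := szasz_nonneg ht.le
    calc szasz n m t * |f t - f x|
        ≤ szasz n m t * ((1 + |t - x|/δ) * modulus f δ) :=
          mul_le_mul_of_nonneg_left hb hsz
      _ = modulus f δ * szasz n m t
          + (modulus f δ/δ) * (szasz n m t * |t - x|) := by
          field_simp
  have hsplit : ∫ t in Set.Ioi (0:ℝ), (modulus f δ * szasz n m t
        + (modulus f δ/δ) * (szasz n m t * |t - x|))
      = modulus f δ * (∫ t in Set.Ioi (0:ℝ), szasz n m t)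
        + (modulus f δ/δ) * (∫ t in Set.Ioi (0:ℝ), szasz n m t * |t - x|) := by
    rw [integral_add (by exact (integrableOn_szasz hn m).const_mul _)
      (by exact (integrableOn_szasz_abs hn m x hx).const_mul _),
      integral_const_mul, integral_const_mul]
  have h0 := nintegral_szasz hn m
  have hnn : (0:ℝ) ≤ (n:ℝ) := Nat.cast_nonneg n
  rw [Real.norm_eq_abs] at h1
  rw [abs_mul, abs_of_nonneg hnn]
  have hchain : (n:ℝ) * |∫ t in Set.Ioi (0:ℝ), szasz n m t * (f t - f x)|
      ≤ (n:ℝ) * (modulus f δ * (∫ t in Set.Ioi (0:ℝ), szasz n m t)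
        + (modulus f δ/δ) * (∫ t in Set.Ioi (0:ℝ), szasz n m t * |t - x|)) := by
    rw [← hsplit]
    exact mul_le_mul_of_nonneg_left ((h1.trans_eq h1').trans h2) hnn
  refine hchain.trans ?_
  have : (n:ℝ) * (modulus f δ * (∫ t in Set.Ioi (0:ℝ), szasz n m t)
        + (modulus f δ/δ) * (∫ t in Set.Ioi (0:ℝ), szasz n m t * |t - x|))
      = modulus f δ * ((n:ℝ) * ∫ t in Set.Ioi (0:ℝ), szasz n m t)
        + (modulus f δ/δ) * ((n:ℝ) * ∫ t in Set.Ioi (0:ℝ), szasz n m t * |t - x|) := by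
    ring
  rw [this, h0, mul_one]
  exact le_of_eq (by ring)

end Fsec


lemma tsum_variance (S a : ℕ → ℝ) (hS : ∀ k, 0 ≤ S k)
    (hS1 : ∑' k, S k = 1) (hSsum : Summable S)
    (hSa : Summable (fun k => S k * a k))
    (hSa2 : Summable (fun k => S k * (a k)^2)) :
    (∑' k, S k * a k)^2 ≤ ∑' k, S k * (a k)^2 := by
  set A := ∑' k, S k * a k with hA
  have h0 : 0 ≤ ∑' k, S k * (a k - A)^2 :=
    tsum_nonneg (fun k => mul_nonneg (hS k) (sq_nonneg _))
  have he : ∀ k, S k * (a k - A)^2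
      = (S k * (a k)^2 - (2*A) * (S k * a k)) + A^2 * S k := fun k => by ring
  have hs1 : Summable (fun k => S k * (a k)^2 - (2*A) * (S k * a k)) :=
    hSa2.sub (hSa.mul_left _)
  have hval : ∑' k, S k * (a k - A)^2
      = ((∑' k, S k * (a k)^2) - (2*A) * (∑' k, S k * a k)) + A^2 * ∑' k, S k := by
    rw [tsum_congr he, Summable.tsum_add hs1 (hSsum.mul_left _),
      Summable.tsum_sub hSa2 (hSa.mul_left _), tsum_mul_left, tsum_mul_left]
  rw [hval, hS1] at h0
  nlinarith

lemma tsum_merge (j : ℤ) (S v : ℕ → ℝ) (u : ℝ)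
    (hv0 : ∀ k : ℕ, (k:ℤ) < j → v k = 0)
    (hs : Summable (fun k => S k * v k)) :
    u * (∑ k ∈ Finset.range j.toNat, S k) + ∑' k, S k * v k
      = ∑' k, S k * (if j ≤ (k:ℤ) then v k else u) := by
  have hw : ∀ k, S k * (if j ≤ (k:ℤ) then v k else u)
      = S k * v k + S k * (if j ≤ (k:ℤ) then 0 else u) := by
    intro k; split_ifs with h
    · ring
    · rw [hv0 k (lt_of_not_ge h)]; ring
  have hfin : ∀ k ∉ Finset.range j.toNat, S k * (if j ≤ (k:ℤ) then 0 else u) = 0 := by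
    intro k hk
    rw [Finset.mem_range, not_lt] at hk
    rw [if_pos (Int.toNat_le.mp hk), mul_zero]
  have hs2 : Summable (fun k => S k * (if j ≤ (k:ℤ) then 0 else u)) :=
    summable_of_ne_finset_zero hfin
  rw [tsum_congr hw, Summable.tsum_add hs hs2, tsum_eq_sum hfin]
  have hval : ∀ k ∈ Finset.range j.toNat, S k * (if j ≤ (k:ℤ) then 0 else u) = S k * u := by
    intro k hk
    rw [Finset.mem_range] at hk
    have hlt : (k:ℤ) < j := by
      by_contra hcon
      push_neg at hcon
      exact absurd (Int.toNat_le.mpr hcon) (not_le.mpr hk)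
    rw [if_neg (not_le.mpr hlt)]
  rw [Finset.sum_congr rfl hval, ← Finset.sum_mul]
  ring

lemma consec_nonneg_int {a : ℝ} (ha : ∃ z : ℤ, (z:ℝ) = a) : 0 ≤ a * (a + 1) := by
  obtain ⟨z, rfl⟩ := ha
  rcases le_or_gt z (-1) with h | h
  · have h1 : (z:ℝ) ≤ -1 := by exact_mod_cast h
    nlinarith
  · have h1 : (0:ℤ) ≤ z := by omega
    have h2 : (0:ℝ) ≤ (z:ℝ) := by exact_mod_cast h1
    nlinarith


noncomputable def wS (n : ℕ) (j : ℤ) (f : ℝ → ℝ) (k : ℕ) : ℝ :=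
  (n:ℝ) * ∫ t in Set.Ioi (0:ℝ), szaszZ n ((k:ℤ) - j) t * f t

noncomputable def cS (n : ℕ) (j : ℤ) (x : ℝ) (k : ℕ) : ℝ :=
  (n:ℝ) * ∫ t in Set.Ioi (0:ℝ), szasz n ((k:ℤ) - j).toNat t * |t - x|

noncomputable def VS (n : ℕ) (j : ℤ) (x : ℝ) (k : ℕ) : ℝ :=
  (n:ℝ) * ∫ t in Set.Ioi (0:ℝ), szasz n ((k:ℤ) - j).toNat t * (t - x)^2

noncomputable def aS (n : ℕ) (j : ℤ) (x : ℝ) (k : ℕ) : ℝ :=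
  if j ≤ (k:ℤ) then cS n j x k else x

noncomputable def bS (n : ℕ) (j : ℤ) (x : ℝ) (k : ℕ) : ℝ :=
  if j ≤ (k:ℤ) then VS n j x k else x^2

noncomputable def gS (n : ℕ) (j : ℤ) (x : ℝ) (k : ℕ) : ℝ :=
  ((k:ℝ) - (j:ℝ) + 1)*((k:ℝ) - (j:ℝ) + 2)/(n:ℝ)^2
    - 2*x*((k:ℝ) - (j:ℝ) + 1)/(n:ℝ) + x^2

section Main
variable {n : ℕ} (hn : 0 < n) (j : ℤ) {x : ℝ} (hx : 0 ≤ x)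

lemma wS_eq_zero (f : ℝ → ℝ) (k : ℕ) (hk : (k:ℤ) < j) : wS n j f k = 0 := by
  unfold wS
  have h : ∀ t : ℝ, szaszZ n ((k:ℤ) - j) t * f t = 0 := fun t => by
    rw [szaszZ, if_neg (by omega), zero_mul]
  simp only [h, integral_zero, mul_zero]

lemma wS_eq (f : ℝ → ℝ) (k : ℕ) (hk : j ≤ (k:ℤ)) :
    wS n j f k = (n:ℝ) * ∫ t in Set.Ioi (0:ℝ), szasz n ((k:ℤ) - j).toNat t * f t := by
  unfold wS
  have h : ∀ t : ℝ, szaszZ n ((k:ℤ) - j) t * f t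
      = szasz n ((k:ℤ) - j).toNat t * f t := fun t => by
    rw [szaszZ, if_pos (by omega)]
  simp only [h]

include hx in
lemma aS_nonneg (k : ℕ) : 0 ≤ aS n j x k := by
  unfold aS
  split_ifs with h
  · unfold cS
    refine mul_nonneg (Nat.cast_nonneg n) ?_
    exact setIntegral_nonneg measurableSet_Ioi fun t ht =>
      mul_nonneg (szasz_nonneg (le_of_lt ht)) (abs_nonneg _)
  · exact hx

lemma VS_nonneg (k : ℕ) : 0 ≤ VS n j x k := by
  unfold VS
  refine mul_nonneg (Nat.cast_nonneg n) ?_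
  exact setIntegral_nonneg measurableSet_Ioi fun t ht =>
    mul_nonneg (szasz_nonneg (le_of_lt ht)) (sq_nonneg _)

lemma bS_nonneg (k : ℕ) : 0 ≤ bS n j x k := by
  unfold bS
  split_ifs with h
  · exact VS_nonneg j k
  · exact sq_nonneg x

include hn hx in
lemma aS_sq_le_bS (k : ℕ) : (aS n j x k)^2 ≤ bS n j x k := by
  unfold aS bS
  split_ifs with h
  · have h1 := nintegral_szasz_abs_le_sqrt hn ((k:ℤ) - j).toNat x hx
    have h2 : 0 ≤ cS n j x k := by
      unfold cS
      refine mul_nonneg (Nat.cast_nonneg n) ?_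
      exact setIntegral_nonneg measurableSet_Ioi fun t ht =>
        mul_nonneg (szasz_nonneg (le_of_lt ht)) (abs_nonneg _)
    have h3 : 0 ≤ VS n j x k := VS_nonneg j k
    have h4 : cS n j x k ≤ Real.sqrt (VS n j x k) := h1
    nlinarith [Real.sq_sqrt h3, Real.sqrt_nonneg (VS n j x k)]
  · exact le_refl _

include hn hx in
lemma bS_le_gS (k : ℕ) : bS n j x k ≤ gS n j x k := by
  unfold bS gS
  split_ifs with h
  · have hc := nintegral_szasz_central hn ((k:ℤ) - j).toNat x
    have hcast : ((((k:ℤ) - j).toNat : ℕ) : ℝ) = (k:ℝ) - (j:ℝ) := by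
      have h1 : (((k:ℤ) - j).toNat : ℤ) = (k:ℤ) - j := Int.toNat_of_nonneg (by omega)
      exact_mod_cast h1
    unfold VS
    rw [hc, hcast]
  · -- k < j : x^2 ≤ gS
    have hd : (k:ℤ) - j + 1 ≤ 0 := by omega
    have hmul : 0 ≤ ((k:ℝ) - (j:ℝ) + 1) * ((k:ℝ) - (j:ℝ) + 2) := by
      have := consec_nonneg_int (a := (k:ℝ) - (j:ℝ) + 1) ⟨(k:ℤ) - j + 1, by push_cast; ring⟩
      nlinarith [this]
    have hneg : (k:ℝ) - (j:ℝ) + 1 ≤ 0 := by exact_mod_cast hd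
    have hnn : (0:ℝ) ≤ (n:ℝ) := Nat.cast_nonneg n
    have ht1 : 0 ≤ ((k:ℝ) - (j:ℝ) + 1)*((k:ℝ) - (j:ℝ) + 2)/(n:ℝ)^2 := by positivity
    have ht2 : 2*x*((k:ℝ) - (j:ℝ) + 1)/(n:ℝ) ≤ 0 :=
      div_nonpos_of_nonpos_of_nonneg (by nlinarith) hnn
    linarith

end Main


lemma summable_szasz_gS (n : ℕ) (j : ℤ) (x : ℝ) :
    Summable (fun k => szasz n k x * gS n j x k) := by
  refine (summable_szasz_quad n x
    (((j:ℝ)-1)*((j:ℝ)-2)/(n:ℝ)^2 - 2*x*(1-(j:ℝ))/(n:ℝ) + x^2)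
    ((4-2*(j:ℝ))/(n:ℝ)^2 - 2*x/(n:ℝ)) ((1:ℝ)/(n:ℝ)^2)).congr fun k => ?_
  unfold gS
  ring

lemma tsum_szasz_gS {n : ℕ} (hn : 0 < n) (j : ℤ) (x : ℝ) :
    ∑' k, szasz n k x * gS n j x k
      = 2*x/(n:ℝ) + ((j:ℝ)-1)*((j:ℝ)-2)/(n:ℝ)^2 := by
  have he : ∀ k : ℕ, szasz n k x * gS n j x k
      = szasz n k x * ((((j:ℝ)-1)*((j:ℝ)-2)/(n:ℝ)^2 - 2*x*(1-(j:ℝ))/(n:ℝ) + x^2)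
        + ((4-2*(j:ℝ))/(n:ℝ)^2 - 2*x/(n:ℝ))*(k:ℝ)
        + ((1:ℝ)/(n:ℝ)^2)*((k:ℝ)*((k:ℝ)-1))) := fun k => by unfold gS; ring
  rw [tsum_congr he, tsum_szasz_quad]
  have hnn : (0:ℝ) < (n:ℝ) := by exact_mod_cast hn
  field_simp
  ring

/-- rate of convergence of `S_{n,j}` in terms of the modulus of continuity. -/
theorem stmt_6 (j : ℤ) (x : ℝ) (hx : 0 < x) (f : ℝ → ℝ)
    (hfc : ContinuousOn f (Set.Ici 0)) (hfb : ∃ M : ℝ, ∀ t ≥ (0 : ℝ), |f t| ≤ M)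
    (n : ℕ) (hn : 1 ≤ n) :
    |Sop n j f x - f x| ≤
      (1 + Real.sqrt (2 * x + ((j : ℝ) - 1) * ((j : ℝ) - 2) / n)) *
        modulus f (1 / Real.sqrt n) := by
  obtain ⟨M, hM⟩ := hfb
  have hn0 : 0 < n := hn
  have hnn : (0:ℝ) < (n:ℝ) := by exact_mod_cast hn0
  have hx0 : 0 ≤ x := hx.le
  have hsqn : 0 < Real.sqrt n := Real.sqrt_pos.mpr hnn
  have hδ : 0 < 1 / Real.sqrt n := by positivity
  have hω0 : 0 ≤ modulus f (1 / Real.sqrt n) := modulus_nonneg hM hδ.le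
  have hM0 : 0 ≤ M := le_trans (abs_nonneg _) (hM 0 le_rfl)
  have hSnn : ∀ k : ℕ, 0 ≤ szasz n k x := fun k => szasz_nonneg hx0
  have hSsum : Summable (fun k => szasz n k x) := summable_szasz n x
  have hS1 : ∑' k, szasz n k x = 1 := tsum_szasz n x
  -- sequence facts
  have hαnn : ∀ k, 0 ≤ aS n j x k := fun k => aS_nonneg j hx0 k
  have hβnn : ∀ k, 0 ≤ bS n j x k := fun k => bS_nonneg j k
  have hα2β : ∀ k, (aS n j x k)^2 ≤ bS n j x k := fun k => aS_sq_le_bS hn0 j hx0 k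
  have hβγ : ∀ k, bS n j x k ≤ gS n j x k := fun k => bS_le_gS hn0 j hx0 k
  have hγs : Summable (fun k => szasz n k x * gS n j x k) := summable_szasz_gS n j x
  have hγt := tsum_szasz_gS hn0 j x
  have hSβ : Summable (fun k => szasz n k x * bS n j x k) :=
    Summable.of_nonneg_of_le (fun k => mul_nonneg (hSnn k) (hβnn k))
      (fun k => mul_le_mul_of_nonneg_left (hβγ k) (hSnn k)) hγs
  have hBT : ∑' k, szasz n k x * bS n j x k ≤ ∑' k, szasz n k x * gS n j x k :=
    Summable.tsum_le_tsum (fun k => mul_le_mul_of_nonneg_left (hβγ k) (hSnn k)) hSβ hγs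
  have hSα2 : Summable (fun k => szasz n k x * (aS n j x k)^2) :=
    Summable.of_nonneg_of_le (fun k => mul_nonneg (hSnn k) (sq_nonneg _))
      (fun k => mul_le_mul_of_nonneg_left (hα2β k) (hSnn k)) hSβ
  have hB'B : ∑' k, szasz n k x * (aS n j x k)^2 ≤ ∑' k, szasz n k x * bS n j x k :=
    Summable.tsum_le_tsum (fun k => mul_le_mul_of_nonneg_left (hα2β k) (hSnn k)) hSα2 hSβ
  have hαle : ∀ k, aS n j x k ≤ 1 + bS n j x k := by
    intro k
    have h1 : aS n j x k ≤ Real.sqrt (bS n j x k) := by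
      rw [← Real.sqrt_sq (hαnn k)]
      exact Real.sqrt_le_sqrt (hα2β k)
    have h2 : Real.sqrt (bS n j x k) ≤ 1 + bS n j x k := by
      nlinarith [Real.sq_sqrt (hβnn k), Real.sqrt_nonneg (bS n j x k)]
    linarith
  have hSα : Summable (fun k => szasz n k x * aS n j x k) :=
    Summable.of_nonneg_of_le (fun k => mul_nonneg (hSnn k) (hαnn k))
      (fun k => mul_le_mul_of_nonneg_left (hαle k) (hSnn k))
      ((hSsum.add hSβ).congr fun k => by ring)
  have hA0 : 0 ≤ ∑' k, szasz n k x * aS n j x k :=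
    tsum_nonneg fun k => mul_nonneg (hSnn k) (hαnn k)
  have hvar : (∑' k, szasz n k x * aS n j x k)^2
      ≤ ∑' k, szasz n k x * (aS n j x k)^2 :=
    tsum_variance _ _ hSnn hS1 hSsum hSα hSα2
  have hJ : 0 ≤ ((j:ℝ)-1)*((j:ℝ)-2) := by
    have h := consec_nonneg_int (a := (j:ℝ) - 2) ⟨j - 2, by push_cast; ring⟩
    nlinarith [h]
  have hT0 : 0 ≤ 2*x/(n:ℝ) + ((j:ℝ)-1)*((j:ℝ)-2)/(n:ℝ)^2 :=
    add_nonneg (by positivity) (div_nonneg hJ (by positivity))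
  have hAT : (∑' k, szasz n k x * aS n j x k)^2
      ≤ 2*x/(n:ℝ) + ((j:ℝ)-1)*((j:ℝ)-2)/(n:ℝ)^2 := by
    calc (∑' k, szasz n k x * aS n j x k)^2
        ≤ ∑' k, szasz n k x * (aS n j x k)^2 := hvar
      _ ≤ ∑' k, szasz n k x * bS n j x k := hB'B
      _ ≤ ∑' k, szasz n k x * gS n j x k := hBT
      _ = _ := hγt
  have hAsq : ∑' k, szasz n k x * aS n j x k
      ≤ Real.sqrt (2*x/(n:ℝ) + ((j:ℝ)-1)*((j:ℝ)-2)/(n:ℝ)^2) := by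
    rw [← Real.sqrt_sq hA0]
    exact Real.sqrt_le_sqrt hAT
  -- w facts
  have hw0 : ∀ k : ℕ, (k:ℤ) < j → wS n j f k = 0 := fun k hk => wS_eq_zero j f k hk
  have hwb : ∀ k, |wS n j f k| ≤ M := by
    intro k
    rcases lt_or_ge (k:ℤ) j with hk | hk
    · rw [hw0 k hk, abs_zero]; exact hM0
    · rw [wS_eq j f k hk]
      exact wk_abs_le hn0 hfc hM _
  have hSw : Summable (fun k => szasz n k x * wS n j f k) := by
    apply Summable.of_abs
    refine Summable.of_nonneg_of_le (fun k => abs_nonneg _) (fun k => ?_)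
      (hSsum.mul_right M)
    rw [abs_mul, abs_of_nonneg (hSnn k)]
    exact mul_le_mul_of_nonneg_left (hwb k) (hSnn k)
  have hiteb : ∀ k : ℕ, |(if j ≤ (k:ℤ) then wS n j f k else f 0)| ≤ max M |f 0| := by
    intro k; split_ifs with h
    · exact le_trans (hwb k) (le_max_left _ _)
    · exact le_max_right _ _
  have hSW : Summable (fun k => szasz n k x * (if j ≤ (k:ℤ) then wS n j f k else f 0)) := by
    apply Summable.of_abs
    refine Summable.of_nonneg_of_le (fun k => abs_nonneg _) (fun k => ?_)
      (hSsum.mul_right (max M |f 0|))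
    rw [abs_mul, abs_of_nonneg (hSnn k)]
    exact mul_le_mul_of_nonneg_left (hiteb k) (hSnn k)
  have hSfx : Summable (fun k => szasz n k x * f x) := hSsum.mul_right _
  have h1 : Sop n j f x = ∑' k, szasz n k x * (if j ≤ (k:ℤ) then wS n j f k else f 0) :=
    tsum_merge j (fun k => szasz n k x) (wS n j f) (f 0) hw0 hSw
  have h2 : f x = ∑' k, szasz n k x * f x := by
    rw [tsum_mul_right, hS1, one_mul]
  have h3 : (∑' k, szasz n k x * (if j ≤ (k:ℤ) then wS n j f k else f 0))
        - (∑' k, szasz n k x * f x)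
      = ∑' k, szasz n k x * ((if j ≤ (k:ℤ) then wS n j f k else f 0) - f x) := by
    rw [← Summable.tsum_sub hSW hSfx]
    exact tsum_congr fun k => by ring
  have hdecomp : Sop n j f x - f x
      = ∑' k, szasz n k x * ((if j ≤ (k:ℤ) then wS n j f k else f 0) - f x) := by
    rw [h1, ← h3, ← h2]
  -- per-index bound
  have hper : ∀ k : ℕ, |(if j ≤ (k:ℤ) then wS n j f k else f 0) - f x|
      ≤ (1 + aS n j x k / (1 / Real.sqrt n)) * modulus f (1 / Real.sqrt n) := by
    intro k
    by_cases hk : j ≤ (k:ℤ)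
    · rw [if_pos hk]
      have hα' : aS n j x k = cS n j x k := if_pos hk
      rw [hα', wS_eq j f k hk, sub_fx_eq hn0 hfc hM ((k:ℤ) - j).toNat x]
      exact per_k_bound hn0 hfc hM ((k:ℤ) - j).toNat x hx0 hδ
    · rw [if_neg hk]
      have hα' : aS n j x k = x := if_neg hk
      rw [hα']
      have h := abs_sub_le_modulus' hM hδ (le_refl (0:ℝ)) hx0
      rwa [zero_sub, abs_neg, abs_of_nonneg hx0] at h
  have hv : Summable (fun k => szasz n k x
      * ((1 + aS n j x k / (1 / Real.sqrt n)) * modulus f (1 / Real.sqrt n))) :=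
    ((hSsum.mul_left (modulus f (1 / Real.sqrt n))).add
      (hSα.mul_left (modulus f (1 / Real.sqrt n) / (1 / Real.sqrt n)))).congr
      fun k => by ring
  have hnorms : Summable (fun k =>
      ‖szasz n k x * ((if j ≤ (k:ℤ) then wS n j f k else f 0) - f x)‖) := by
    refine Summable.of_nonneg_of_le (fun k => norm_nonneg _) (fun k => ?_) hv
    rw [Real.norm_eq_abs, abs_mul, abs_of_nonneg (hSnn k)]
    exact mul_le_mul_of_nonneg_left (hper k) (hSnn k)
  have habs : |∑' k, szasz n k x * ((if j ≤ (k:ℤ) then wS n j f k else f 0) - f x)|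
      ≤ ∑' k, szasz n k x
          * ((1 + aS n j x k / (1 / Real.sqrt n)) * modulus f (1 / Real.sqrt n)) := by
    calc |∑' k, szasz n k x * ((if j ≤ (k:ℤ) then wS n j f k else f 0) - f x)|
        = ‖∑' k, szasz n k x * ((if j ≤ (k:ℤ) then wS n j f k else f 0) - f x)‖ :=
          (Real.norm_eq_abs _).symm
      _ ≤ ∑' k, ‖szasz n k x * ((if j ≤ (k:ℤ) then wS n j f k else f 0) - f x)‖ :=
          norm_tsum_le_tsum_norm hnorms
      _ ≤ _ := by
          refine Summable.tsum_le_tsum (fun k => ?_) hnorms hv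
          rw [Real.norm_eq_abs, abs_mul, abs_of_nonneg (hSnn k)]
          exact mul_le_mul_of_nonneg_left (hper k) (hSnn k)
  have hval : ∑' k, szasz n k x
        * ((1 + aS n j x k / (1 / Real.sqrt n)) * modulus f (1 / Real.sqrt n))
      = (1 + (∑' k, szasz n k x * aS n j x k) / (1 / Real.sqrt n))
          * modulus f (1 / Real.sqrt n) := by
    have he : ∀ k : ℕ, szasz n k x
          * ((1 + aS n j x k / (1 / Real.sqrt n)) * modulus f (1 / Real.sqrt n))
        = modulus f (1 / Real.sqrt n) * szasz n k x
          + (modulus f (1 / Real.sqrt n) / (1 / Real.sqrt n))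
            * (szasz n k x * aS n j x k) := fun k => by ring
    rw [tsum_congr he, Summable.tsum_add (hSsum.mul_left _) (hSα.mul_left _),
      tsum_mul_left, tsum_mul_left, hS1]
    ring
  -- final comparison
  have hfinal : (∑' k, szasz n k x * aS n j x k) / (1 / Real.sqrt n)
      ≤ Real.sqrt (2 * x + ((j:ℝ) - 1) * ((j:ℝ) - 2) / n) := by
    rw [div_eq_mul_inv, one_div, inv_inv]
    calc (∑' k, szasz n k x * aS n j x k) * Real.sqrt n
        ≤ Real.sqrt (2*x/(n:ℝ) + ((j:ℝ)-1)*((j:ℝ)-2)/(n:ℝ)^2) * Real.sqrt n :=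
          mul_le_mul_of_nonneg_right hAsq hsqn.le
      _ = Real.sqrt ((2*x/(n:ℝ) + ((j:ℝ)-1)*((j:ℝ)-2)/(n:ℝ)^2) * (n:ℝ)) :=
          (Real.sqrt_mul hT0 _).symm
      _ = Real.sqrt (2 * x + ((j:ℝ) - 1) * ((j:ℝ) - 2) / n) := by
          congr 1
          field_simp
  calc |Sop n j f x - f x|
      = |∑' k, szasz n k x * ((if j ≤ (k:ℤ) then wS n j f k else f 0) - f x)| := by
        rw [hdecomp]
    _ ≤ (1 + (∑' k, szasz n k x * aS n j x k) / (1 / Real.sqrt n))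
          * modulus f (1 / Real.sqrt n) := by rw [← hval]; exact habs
    _ ≤ (1 + Real.sqrt (2 * x + ((j:ℝ) - 1) * ((j:ℝ) - 2) / n))
          * modulus f (1 / Real.sqrt n) :=
        mul_le_mul_of_nonneg_right (by linarith) hω0
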